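/- Let φ : M → N be a map between Riemannian manifolds that is an isometry between (M, g) and (N, ĝ), i.e., g = φ*ĝ, where g and ĝ are metrics of class C⁰ and C^∞ respectively and φ is C². Then in local coordinates the components of φ satisfy ∂²φ^m/∂x^i∂x^j = Γ^k_{ij}·∂φ^m/∂x^k − Γ̂^m_{kl}·(∂φ^k/∂x^i)·(∂φ^l/∂x^j), where Γ and Γ̂ are the Christoffel symbols of g and ĝ respectively. -/

import Mathlib

open Finset Matrix

/-- The `k`-th partial derivative of a real-valued function on Euclidean space. -/
noncomputable def pd {n : ℕ} (k : Fin n) (f : EuclideanSpace ℝ (Fin n) → ℝ)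
    (x : EuclideanSpace ℝ (Fin n)) : ℝ :=
  fderiv ℝ f x (EuclideanSpace.single k 1)

/-- Christoffel symbols of the first kind. -/
noncomputable def christoffelFirst {n : ℕ}
    (g : EuclideanSpace ℝ (Fin n) → Matrix (Fin n) (Fin n) ℝ)
    (x : EuclideanSpace ℝ (Fin n)) (i k p : Fin n) : ℝ :=
  (1 / 2) * (pd k (fun y => g y i p) x + pd p (fun y => g y i k) x - pd i (fun y => g y k p) x)

/-- Christoffel symbols of the second kind: `Γ^k_{ij} = g^{km} Γ_{mij}`. -/
noncomputable def christoffelSecond {n : ℕ}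
    (g : EuclideanSpace ℝ (Fin n) → Matrix (Fin n) (Fin n) ℝ)
    (x : EuclideanSpace ℝ (Fin n)) (k i j : Fin n) : ℝ :=
  ∑ m, (g x)⁻¹ k m * christoffelFirst g x m i j

lemma pd_congr {f h : EuclideanSpace ℝ (Fin n) → ℝ} {x : EuclideanSpace ℝ (Fin n)}
    {p : Fin n} (hfh : f = h) : pd p f x = pd p h x := by rw [hfh]

lemma euclid_decomp (v : EuclideanSpace ℝ (Fin n)) :
    v = ∑ q, v q • EuclideanSpace.single q (1:ℝ) := by
  ext j
  rw [WithLp.ofLp_sum, Finset.sum_apply]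
  simp [EuclideanSpace.single_apply]

lemma clm_apply_eq_sum (L : EuclideanSpace ℝ (Fin n) →L[ℝ] ℝ) (v : EuclideanSpace ℝ (Fin n)) :
    L v = ∑ q, v q * L (EuclideanSpace.single q 1) := by
  conv_lhs => rw [euclid_decomp v]
  rw [map_sum]
  simp [smul_eq_mul]

lemma pd_component (φ : EuclideanSpace ℝ (Fin n) → EuclideanSpace ℝ (Fin n))
    {x : EuclideanSpace ℝ (Fin n)} (hφ : DifferentiableAt ℝ φ x) (p q : Fin n) :
    pd p (fun y => φ y q) x = (fderiv ℝ φ x (EuclideanSpace.single p 1)) q := by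
  have : (fun y => φ y q) = (EuclideanSpace.proj q : EuclideanSpace ℝ (Fin n) →L[ℝ] ℝ) ∘ φ := rfl
  rw [pd, this, fderiv_comp x (EuclideanSpace.proj q).differentiableAt hφ,
    ContinuousLinearMap.fderiv]
  simp

lemma pd_sum {ι : Type*} {x : EuclideanSpace ℝ (Fin n)} {p : Fin n} (s : Finset ι)
    (F : ι → EuclideanSpace ℝ (Fin n) → ℝ)
    (h : ∀ k ∈ s, DifferentiableAt ℝ (F k) x) :
    pd p (fun y => ∑ k ∈ s, F k y) x = ∑ k ∈ s, pd p (F k) x := by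
  unfold pd
  rw [fderiv_fun_sum h]
  simp

lemma pd_mul {f h : EuclideanSpace ℝ (Fin n) → ℝ} {x : EuclideanSpace ℝ (Fin n)} {p : Fin n}
    (hf : DifferentiableAt ℝ f x) (hh : DifferentiableAt ℝ h x) :
    pd p (fun y => f y * h y) x = pd p f x * h x + f x * pd p h x := by
  unfold pd
  rw [fderiv_fun_mul hf hh]
  simp [smul_eq_mul]
  ring

lemma pd_chain (h : EuclideanSpace ℝ (Fin n) → ℝ)
    (φ : EuclideanSpace ℝ (Fin n) → EuclideanSpace ℝ (Fin n))
    {x : EuclideanSpace ℝ (Fin n)} {p : Fin n}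
    (hh : DifferentiableAt ℝ h (φ x)) (hφ : DifferentiableAt ℝ φ x) :
    pd p (fun y => h (φ y)) x = ∑ q, pd p (fun y => φ y q) x * pd q h (φ x) := by
  have e : pd p (fun y => h (φ y)) x
      = fderiv ℝ h (φ x) (fderiv ℝ φ x (EuclideanSpace.single p 1)) := by
    rw [pd, show (fun y => h (φ y)) = h ∘ φ from rfl, fderiv_comp x hh hφ]
    simp
  rw [e, clm_apply_eq_sum]
  congr 1
  ext q
  rw [pd_component φ hφ]
  rfl

lemma comp_contDiff {φ : EuclideanSpace ℝ (Fin n) → EuclideanSpace ℝ (Fin n)}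
    (hφ : ContDiff ℝ 2 φ) (k : Fin n) : ContDiff ℝ 2 (fun y => φ y k) :=
  (EuclideanSpace.proj k : EuclideanSpace ℝ (Fin n) →L[ℝ] ℝ).contDiff.comp hφ

lemma pd_contDiff {f : EuclideanSpace ℝ (Fin n) → ℝ} (hf : ContDiff ℝ 2 f) (j : Fin n) :
    ContDiff ℝ 1 (fun y => pd j f y) := by
  have h1 : ContDiff ℝ 1 (fderiv ℝ f) := hf.fderiv_right (by norm_num)
  exact (ContinuousLinearMap.apply ℝ ℝ (EuclideanSpace.single j 1)).contDiff.comp h1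

lemma pd_pd_eq {f : EuclideanSpace ℝ (Fin n) → ℝ} (hf : ContDiff ℝ 2 f)
    (x : EuclideanSpace ℝ (Fin n)) (p i : Fin n) :
    pd p (fun y => pd i f y) x
      = fderiv ℝ (fderiv ℝ f) x (EuclideanSpace.single p 1) (EuclideanSpace.single i 1) := by
  have h1 : ContDiff ℝ 1 (fderiv ℝ f) := hf.fderiv_right (by norm_num)
  have hdf : DifferentiableAt ℝ (fderiv ℝ f) x := h1.differentiable one_ne_zero x
  have e : (fun y => pd i f y)
      = (ContinuousLinearMap.apply ℝ ℝ (EuclideanSpace.single i 1)) ∘ (fderiv ℝ f) := rfl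
  rw [pd, e, fderiv_comp x (ContinuousLinearMap.apply ℝ ℝ
      (EuclideanSpace.single i 1)).differentiableAt hdf]
  simp

lemma pd_symm {f : EuclideanSpace ℝ (Fin n) → ℝ} (hf : ContDiff ℝ 2 f)
    (x : EuclideanSpace ℝ (Fin n)) (p i : Fin n) :
    pd p (fun y => pd i f y) x = pd i (fun y => pd p f y) x := by
  rw [pd_pd_eq hf, pd_pd_eq hf]
  exact (hf.contDiffAt.isSymmSndFDerivAt (by simp)) _ _

lemma deriv_pullback (φ : EuclideanSpace ℝ (Fin n) → EuclideanSpace ℝ (Fin n))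
    (ghat : EuclideanSpace ℝ (Fin n) → Matrix (Fin n) (Fin n) ℝ)
    (hφ : ContDiff ℝ 2 φ)
    (hghat : ∀ i j, ContDiff ℝ (⊤ : ℕ∞) (fun y => ghat y i j))
    (x : EuclideanSpace ℝ (Fin n)) (p a b : Fin n) :
    pd p (fun y => ∑ k, ∑ l,
        ghat (φ y) k l * pd a (fun z => φ z k) y * pd b (fun z => φ z l) y) x
    = ∑ k, ∑ l,
        ((∑ q, pd p (fun z => φ z q) x * pd q (fun y => ghat y k l) (φ x))
            * pd a (fun z => φ z k) x * pd b (fun z => φ z l) x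
          + ghat (φ x) k l * pd p (fun y => pd a (fun z => φ z k) y) x
            * pd b (fun z => φ z l) x
          + ghat (φ x) k l * pd a (fun z => φ z k) x
            * pd p (fun y => pd b (fun z => φ z l) y) x) := by
  have hφd : Differentiable ℝ φ := hφ.differentiable (by norm_num)
  have dG : ∀ k l (y : EuclideanSpace ℝ (Fin n)),
      DifferentiableAt ℝ (fun y => ghat (φ y) k l) y := fun k l y =>
    (((hghat k l).differentiable (by simp) (φ y)).comp y (hφd y))
  have dP : ∀ a k (y : EuclideanSpace ℝ (Fin n)),
      DifferentiableAt ℝ (fun y => pd a (fun z => φ z k) y) y := fun a k y =>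
    ((pd_contDiff (comp_contDiff hφ k) a).differentiable one_ne_zero y)
  have dterm : ∀ k l (y : EuclideanSpace ℝ (Fin n)),
      DifferentiableAt ℝ
        (fun y => ghat (φ y) k l * pd a (fun z => φ z k) y * pd b (fun z => φ z l) y) y :=
    fun k l y => ((dG k l y).mul (dP a k y)).mul (dP b l y)
  rw [pd_sum _ _ (fun k _ => by
    exact DifferentiableAt.fun_sum (fun l _ => dterm k l x))]
  refine Finset.sum_congr rfl (fun k _ => ?_)
  rw [pd_sum _ _ (fun l _ => dterm k l x)]
  refine Finset.sum_congr rfl (fun l _ => ?_)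
  rw [pd_mul ((dG k l x).fun_mul (dP a k x)) (dP b l x), pd_mul (dG k l x) (dP a k x)]
  have hc : pd p (fun y => ghat (φ y) k l) x
      = ∑ q, pd p (fun z => φ z q) x * pd q (fun y => ghat y k l) (φ x) :=
    pd_chain _ φ ((hghat k l).differentiable (by simp) (φ x)) (hφd x)
  rw [hc]
  ring

lemma sum3_comm23 (F : Fin n → Fin n → Fin n → ℝ) :
    (∑ k, ∑ l, ∑ q, F k l q) = ∑ k, ∑ q, ∑ l, F k l q :=
  Finset.sum_congr rfl fun _ _ => Finset.sum_comm

lemma sum3_comm12 (F : Fin n → Fin n → Fin n → ℝ) :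
    (∑ k, ∑ l, ∑ q, F k l q) = ∑ l, ∑ k, ∑ q, F k l q :=
  Finset.sum_comm

lemma sum3_comm13 (F : Fin n → Fin n → Fin n → ℝ) :
    (∑ k, ∑ l, ∑ q, F k l q) = ∑ q, ∑ l, ∑ k, F k l q := by
  rw [sum3_comm23, sum3_comm12 (fun k q l => F k l q)]
  exact Finset.sum_congr rfl fun _ _ => Finset.sum_comm

lemma key_algebra (J : Fin n → Fin n → ℝ) (S : Fin n → Fin n → Fin n → ℝ)
    (G : Fin n → Fin n → ℝ) (d : Fin n → Fin n → Fin n → ℝ)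
    (hG : ∀ k l, G k l = G l k) (hS : ∀ p q k, S p q k = S q p k) (a i j : Fin n) :
    (1/2 : ℝ) * ((∑ k, ∑ l, ((∑ q, J q i * d q k l) * J k a * J l j
          + G k l * S i a k * J l j + G k l * J k a * S i j l))
      + (∑ k, ∑ l, ((∑ q, J q j * d q k l) * J k a * J l i
          + G k l * S j a k * J l i + G k l * J k a * S j i l))
      - (∑ k, ∑ l, ((∑ q, J q a * d q k l) * J k i * J l j
          + G k l * S a i k * J l j + G k l * J k i * S a j l)))
    = (∑ k, ∑ l, G k l * J k a * S i j l)
      + ∑ k, ∑ q, ∑ l,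
          ((1/2 : ℝ) * (d q k l + d l k q - d k q l)) * J k a * J q i * J l j := by
  -- expand each double sum into sums of canonical triple/double sums
  have split : ∀ (c1 c2 c3 : Fin n) (A : Fin n → Fin n → Fin n → ℝ)
      (B C : Fin n → Fin n → ℝ),
      (∑ k, ∑ l, ((∑ q, A k l q) * J k c2 * J l c3 + B k l + C k l))
        = (∑ k, ∑ l, ∑ q, A k l q * J k c2 * J l c3) + (∑ k, ∑ l, B k l)
          + (∑ k, ∑ l, C k l) := by
    intro c1 c2 c3 A B C
    rw [← Finset.sum_add_distrib, ← Finset.sum_add_distrib]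
    refine Finset.sum_congr rfl fun k _ => ?_
    rw [← Finset.sum_add_distrib, ← Finset.sum_add_distrib]
    refine Finset.sum_congr rfl fun l _ => ?_
    rw [Finset.sum_mul, Finset.sum_mul]
  rw [split a a j _ _ _, split a a i _ _ _, split a i j _ _ _]
  -- canonical forms of the T1 pieces
  have t1 : (∑ k, ∑ l, ∑ q, J q i * d q k l * J k a * J l j)
      = ∑ k, ∑ q, ∑ l, d q k l * J k a * J q i * J l j := by
    rw [sum3_comm23]
    exact Finset.sum_congr rfl fun k _ => Finset.sum_congr rfl fun q _ =>
      Finset.sum_congr rfl fun l _ => by ring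
  have t2 : (∑ k, ∑ l, ∑ q, J q j * d q k l * J k a * J l i)
      = ∑ k, ∑ q, ∑ l, d l k q * J k a * J q i * J l j := by
    exact Finset.sum_congr rfl fun k _ => Finset.sum_congr rfl fun q _ =>
      Finset.sum_congr rfl fun l _ => by ring
  have t3 : (∑ k, ∑ l, ∑ q, J q a * d q k l * J k i * J l j)
      = ∑ k, ∑ q, ∑ l, d k q l * J k a * J q i * J l j := by
    rw [sum3_comm13 (fun k l q => J q a * d q k l * J k i * J l j)]
    conv_rhs => rw [← sum3_comm23 (fun k l q => d k q l * J k a * J q i * J l j)]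
    exact Finset.sum_congr rfl fun k _ => Finset.sum_congr rfl fun q _ =>
      Finset.sum_congr rfl fun l _ => by ring
  rw [t1, t2, t3]
  -- symmetry manipulations on the S-pieces
  have hA : (∑ k, ∑ l, G k l * S i a k * J l j) = ∑ k, ∑ l, G k l * S a i k * J l j :=
    Finset.sum_congr rfl fun k _ => Finset.sum_congr rfl fun l _ => by rw [hS i a k]
  have hB : (∑ k, ∑ l, G k l * S j a k * J l i) = ∑ k, ∑ l, G k l * J k i * S a j l := by
    rw [Finset.sum_comm]
    exact Finset.sum_congr rfl fun k _ => Finset.sum_congr rfl fun l _ => by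
      rw [hS j a l, hG l k]; ring
  have hC : (∑ k, ∑ l, G k l * J k a * S j i l) = ∑ k, ∑ l, G k l * J k a * S i j l :=
    Finset.sum_congr rfl fun k _ => Finset.sum_congr rfl fun l _ => by rw [hS j i l]
  rw [hA, hB, hC]
  -- expand the RHS christoffel sum
  have rhs : (∑ k, ∑ q, ∑ l,
        ((1/2 : ℝ) * (d q k l + d l k q - d k q l)) * J k a * J q i * J l j)
      = (1/2 : ℝ) * ((∑ k, ∑ q, ∑ l, d q k l * J k a * J q i * J l j)
          + (∑ k, ∑ q, ∑ l, d l k q * J k a * J q i * J l j)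
          - (∑ k, ∑ q, ∑ l, d k q l * J k a * J q i * J l j)) := by
    have pw : (∑ k, ∑ q, ∑ l,
          ((1/2 : ℝ) * (d q k l + d l k q - d k q l)) * J k a * J q i * J l j)
        = ∑ k, ∑ q, ∑ l,
          ((1/2:ℝ) * (d q k l * J k a * J q i * J l j)
            + (1/2:ℝ) * (d l k q * J k a * J q i * J l j)
            - (1/2:ℝ) * (d k q l * J k a * J q i * J l j)) :=
      Finset.sum_congr rfl fun k _ => Finset.sum_congr rfl fun q _ =>
        Finset.sum_congr rfl fun l _ => by ring
    rw [pw]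
    simp only [Finset.sum_sub_distrib, Finset.sum_add_distrib, ← Finset.mul_sum]
    ring
  rw [rhs]
  ring

lemma christoffel_pullback (φ : EuclideanSpace ℝ (Fin n) → EuclideanSpace ℝ (Fin n))
    (g ghat : EuclideanSpace ℝ (Fin n) → Matrix (Fin n) (Fin n) ℝ)
    (hφ : ContDiff ℝ 2 φ)
    (hghat : ∀ i j, ContDiff ℝ (⊤ : ℕ∞) (fun y => ghat y i j))
    (hghatsymm : ∀ x, (ghat x).IsSymm)
    (hpull : ∀ x i j, g x i j =
      ∑ k, ∑ l, ghat (φ x) k l * pd i (fun y => φ y k) x * pd j (fun y => φ y l) x)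
    (x : EuclideanSpace ℝ (Fin n)) (a i j : Fin n) :
    christoffelFirst g x a i j
      = (∑ k, ∑ l, ghat (φ x) k l * pd a (fun z => φ z k) x
            * pd i (fun y => pd j (fun z => φ z l) y) x)
        + ∑ k, ∑ q, ∑ l, christoffelFirst ghat (φ x) k q l * pd a (fun z => φ z k) x
            * pd i (fun z => φ z q) x * pd j (fun z => φ z l) x := by
  have hG : ∀ k l, ghat (φ x) k l = ghat (φ x) l k := fun k l =>
    (hghatsymm (φ x)).apply l k
  have hS : ∀ p q k, pd p (fun y => pd q (fun z => φ z k) y) x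
      = pd q (fun y => pd p (fun z => φ z k) y) x := fun p q k =>
    pd_symm (comp_contDiff hφ k) x p q
  have key := key_algebra (fun q p => pd p (fun z => φ z q) x)
    (fun p b k => pd p (fun y => pd b (fun z => φ z k) y) x)
    (fun k l => ghat (φ x) k l)
    (fun q k l => pd q (fun y => ghat y k l) (φ x)) hG hS a i j
  unfold christoffelFirst
  rw [pd_congr (funext fun y => hpull y a j), deriv_pullback φ ghat hφ hghat x i a j,
      pd_congr (funext fun y => hpull y a i), deriv_pullback φ ghat hφ hghat x j a i,
      pd_congr (funext fun y => hpull y i j), deriv_pullback φ ghat hφ hghat x a i j]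
  exact key

/-- Taylor's identity for an isometry `φ` pulling back `ĝ` to `g` (in coordinates):
`∂²φ^m/∂x^i∂x^j = Γ^k_{ij} ∂φ^m/∂x^k − Γ̂^m_{kl} (∂φ^k/∂x^i)(∂φ^l/∂x^j)`. -/
theorem isometry_second_derivative_identity (n : ℕ)
    (φ : EuclideanSpace ℝ (Fin n) → EuclideanSpace ℝ (Fin n))
    (g ghat : EuclideanSpace ℝ (Fin n) → Matrix (Fin n) (Fin n) ℝ)
    (hφ : ContDiff ℝ 2 φ)
    (hghat : ∀ i j, ContDiff ℝ (⊤ : ℕ∞) (fun y => ghat y i j))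
    (hgcont : ∀ i j, Continuous (fun y => g y i j))
    (hgsymm : ∀ x, (g x).IsSymm) (hgpos : ∀ x, (g x).PosDef)
    (hghatsymm : ∀ x, (ghat x).IsSymm) (hghatpos : ∀ x, (ghat x).PosDef)
    (hpull : ∀ x i j, g x i j =
      ∑ k, ∑ l, ghat (φ x) k l * pd i (fun y => φ y k) x * pd j (fun y => φ y l) x) :
    ∀ x i j m,
      pd i (fun y => pd j (fun z => φ z m) y) x =
        (∑ k, christoffelSecond g x k i j * pd k (fun y => φ y m) x)
          - ∑ k, ∑ l, christoffelSecond ghat (φ x) m k l *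
              pd i (fun y => φ y k) x * pd j (fun y => φ y l) x := by
  intro x i j m
  set Jm : Matrix (Fin n) (Fin n) ℝ := Matrix.of fun k p => pd p (fun z => φ z k) x with hJm
  set Gh : Matrix (Fin n) (Fin n) ℝ := ghat (φ x) with hGh
  set Sv : Fin n → ℝ := fun l => pd i (fun y => pd j (fun z => φ z l) y) x with hSv
  set v : Fin n → ℝ := fun k => ∑ q, ∑ l, christoffelFirst ghat (φ x) k q l
      * pd i (fun z => φ z q) x * pd j (fun z => φ z l) x with hv
  -- the metric as a matrix product
  have hgx : g x = Jmᵀ * Gh * Jm := by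
    ext a b
    rw [hpull x a b]
    simp only [Matrix.mul_apply, Matrix.transpose_apply, hJm, Matrix.of_apply, hGh,
      Finset.sum_mul]
    rw [Finset.sum_comm]
    exact Finset.sum_congr rfl fun k _ => Finset.sum_congr rfl fun l _ => by ring
  -- invertibility
  have hGhdet : IsUnit Gh.det := (hghatpos (φ x)).det_pos.ne'.isUnit
  have hgdet : IsUnit (g x).det := (hgpos x).det_pos.ne'.isUnit
  have hdetfac : (g x).det = Jm.det * Gh.det * Jm.det := by
    rw [hgx, Matrix.det_mul, Matrix.det_mul, Matrix.det_transpose]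
  have hJdet : IsUnit Jm.det := by
    rcases eq_or_ne Jm.det 0 with h | h
    · exfalso
      rw [hdetfac, h] at hgdet
      simp at hgdet
    · exact h.isUnit
  have hJTdet : IsUnit Jmᵀ.det := by rwa [Matrix.det_transpose]
  have hginv : (g x)⁻¹ = Jm⁻¹ * (Gh⁻¹ * Jmᵀ⁻¹) := by
    rw [hgx, Matrix.mul_inv_rev, Matrix.mul_inv_rev]
  have hkey : Jm * (g x)⁻¹ * Jmᵀ = Gh⁻¹ := by
    rw [hginv, ← Matrix.mul_assoc, ← Matrix.mul_assoc,
      Matrix.mul_nonsing_inv _ hJdet, Matrix.one_mul, Matrix.mul_assoc,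
      Matrix.nonsing_inv_mul _ hJTdet, Matrix.mul_one]
  -- the Christoffel symbols of the first kind as a matrix-vector product
  have hGamma : (fun a => christoffelFirst g x a i j) = Jmᵀ *ᵥ (Gh *ᵥ Sv + v) := by
    funext a
    rw [christoffel_pullback φ g ghat hφ hghat hghatsymm hpull x a i j]
    simp only [Matrix.mulVec, dotProduct, Matrix.transpose_apply, Pi.add_apply,
      hJm, Matrix.of_apply, hGh, hSv, hv]
    simp only [mul_add, Finset.sum_add_distrib, Finset.mul_sum]
    congr 1
    · exact Finset.sum_congr rfl fun k _ => Finset.sum_congr rfl fun l _ => by ring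
    · exact Finset.sum_congr rfl fun k _ => Finset.sum_congr rfl fun q _ =>
        Finset.sum_congr rfl fun l _ => by ring
  -- the first sum in the statement
  have hA : (∑ k, christoffelSecond g x k i j * pd k (fun y => φ y m) x)
      = Sv m + (Gh⁻¹ *ᵥ v) m := by
    have e1 : (∑ k, christoffelSecond g x k i j * pd k (fun y => φ y m) x)
        = (Jm *ᵥ ((g x)⁻¹ *ᵥ (fun a => christoffelFirst g x a i j))) m := by
      simp only [Matrix.mulVec, dotProduct, hJm, Matrix.of_apply, christoffelSecond]
      exact Finset.sum_congr rfl fun k _ => by ring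
    rw [e1, hGamma, Matrix.mulVec_mulVec, Matrix.mulVec_mulVec, hkey,
      Matrix.mulVec_add, Matrix.mulVec_mulVec, Matrix.nonsing_inv_mul _ hGhdet,
      Matrix.one_mulVec]
    rfl
  -- the second sum in the statement
  have hB : (∑ k, ∑ l, christoffelSecond ghat (φ x) m k l *
        pd i (fun y => φ y k) x * pd j (fun y => φ y l) x)
      = (Gh⁻¹ *ᵥ v) m := by
    have e2 : (∑ k, ∑ l, christoffelSecond ghat (φ x) m k l *
          pd i (fun y => φ y k) x * pd j (fun y => φ y l) x)
        = ∑ k, ∑ l, ∑ a, (ghat (φ x))⁻¹ m a * christoffelFirst ghat (φ x) a k l *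
            pd i (fun y => φ y k) x * pd j (fun y => φ y l) x := by
      refine Finset.sum_congr rfl fun k _ => Finset.sum_congr rfl fun l _ => ?_
      simp only [christoffelSecond, Finset.sum_mul]
    rw [e2, sum3_comm13 (fun k l a => (ghat (φ x))⁻¹ m a * christoffelFirst ghat (φ x) a k l *
        pd i (fun y => φ y k) x * pd j (fun y => φ y l) x)]
    have e3 : ∀ a : Fin n, (∑ l, ∑ k, (ghat (φ x))⁻¹ m a * christoffelFirst ghat (φ x) a k l *
          pd i (fun y => φ y k) x * pd j (fun y => φ y l) x)
        = ∑ k, ∑ l, (ghat (φ x))⁻¹ m a * christoffelFirst ghat (φ x) a k l *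
            pd i (fun y => φ y k) x * pd j (fun y => φ y l) x := fun a => Finset.sum_comm
    rw [Finset.sum_congr rfl fun a _ => e3 a]
    simp only [Matrix.mulVec, dotProduct, hv, hGh, Finset.mul_sum]
    exact Finset.sum_congr rfl fun a _ => Finset.sum_congr rfl fun q _ =>
      Finset.sum_congr rfl fun l _ => by ring
  rw [hA, hB]
  exact (add_sub_cancel_right (Sv m) _).symm
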